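/- arXiv:2012.11947 — 3 statements merged into one kernel-verified Lean document; each statement's English description precedes it below -/
import Mathlib

section
/- For every m ∈ ℝ and λ₀ > 0, the function f : (0,∞) → ℝ defined by f(Λ) = −1/4 − m² − m·tanh(m·log(Λ/λ₀)) satisfies the renormalization group differential equation Λ · f'(Λ) = (f(Λ) + 1/4 + m²)² − m² for all Λ > 0. -/
/-!
With `s = log (Λ / λ₀)` the operator `Λ d/dΛ` becomes `d/ds`, and `u(s) = m tanh (m s)` solves the
Riccati equation `u' = m² - u²` because `tanh' = 1 - tanh²`. Since `f + 1/4 + m² = -u`, this is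
exactly the flow equation.
-/

namespace Real

theorem hasDerivAt_tanh (x : ℝ) : HasDerivAt tanh (1 - tanh x ^ 2) x := by
  have hcosh : cosh x ≠ 0 := (cosh_pos x).ne'
  have hderiv : 1 - tanh x ^ 2 = (cosh x * cosh x - sinh x * sinh x) / cosh x ^ 2 := by
    rw [tanh_eq_sinh_div_cosh]
    field_simp
  rw [hderiv, show tanh = fun y => sinh y / cosh y from funext tanh_eq_sinh_div_cosh]
  exact (hasDerivAt_sinh x).div (hasDerivAt_cosh x) hcosh

theorem hasDerivAt_mul_tanh_mul (m s : ℝ) :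
    HasDerivAt (fun s => m * tanh (m * s)) (m ^ 2 - (m * tanh (m * s)) ^ 2) s := by
  have h := ((hasDerivAt_tanh (m * s)).comp s ((hasDerivAt_id' s).const_mul m)).const_mul m
  exact h.congr_deriv (by ring)

end Real

theorem HasDerivAt.comp_log_div {u : ℝ → ℝ} {u' c x : ℝ} (hc : c ≠ 0) (hx : x ≠ 0)
    (hu : HasDerivAt u u' (Real.log (x / c))) :
    HasDerivAt (fun L => u (Real.log (L / c))) (u' / x) x := by
  have hlog : HasDerivAt (fun L => Real.log (L / c)) x⁻¹ x := by
    convert ((hasDerivAt_id' x).div_const c).log (div_ne_zero hx hc) using 1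
    field_simp
  rw [div_eq_mul_inv]
  exact hu.comp x hlog

/-- The running coupling `f(Λ) = -1/4 - m² - m tanh(m log(Λ/λ₀))` solves the
renormalization group flow equation `Λ f'(Λ) = (f(Λ) + 1/4 + m²)² - m²`. -/
theorem dirichlet_running_coupling_flow (m lam0 : ℝ) (hlam0 : 0 < lam0) :
    ∀ Λ > (0:ℝ),
      Λ * deriv (fun L : ℝ => -1/4 - m^2 - m * Real.tanh (m * Real.log (L / lam0))) Λ
        = ((-1/4 - m^2 - m * Real.tanh (m * Real.log (Λ / lam0))) + 1/4 + m^2)^2 - m^2 := by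
  intro Λ hΛ
  have hflow := (HasDerivAt.comp_log_div hlam0.ne' hΛ.ne'
    (Real.hasDerivAt_mul_tanh_mul m _)).const_sub (-1/4 - m ^ 2)
  rw [hflow.deriv]
  field_simp
  ring
end

section
/- Let m_I > 0, Λ₀ > 0, θ₀ ∈ ℝ, and define f(Λ) = m_I·tan(θ₀ + m_I·log(Λ/Λ₀)) + m_I² − 1/4 on the open set of Λ > 0 for which θ₀ + m_I·log(Λ/Λ₀) is not of the form π/2 + πk (k ∈ ℤ). Then: (1) Λ · f'(Λ) = (f(Λ) + 1/4 − m_I²)² + m_I² at every such Λ (this is the flow equation Λ df/dΛ = (f + 1/4 + α)² − α with α = −m_I² < 0); and (2) the discrete scaling symmetry f(e^{π/m_I}·Λ) = f(Λ) holds whenever both sides are defined. -/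
/-!
Along the flow the phase `θ(Λ) = θ₀ + m log(Λ/Λ₀)` is linear in `log Λ`, so `Λ d/dΛ` acts on
`m tan θ` as `m² sec² θ = (m tan θ)² + m²`, which is the flow equation for `f + 1/4 - m² = m tan θ`.
Rescaling `Λ` by `e^{π/m}` shifts `θ` by exactly `π`, the period of `tan`.
-/

open Real

lemma Real.cos_ne_zero_of_forall_ne_pi_div_two_add {θ : ℝ} (h : ∀ k : ℤ, θ ≠ π / 2 + π * k) :
    cos θ ≠ 0 :=
  cos_ne_zero_iff.2 fun k hk => h k (by rw [hk]; ring)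

lemma hasDerivAt_tan_add_mul_log_div {θ₀ a Λ₀ x : ℝ} (hΛ₀ : Λ₀ ≠ 0) (hx : x ≠ 0)
    (hcos : cos (θ₀ + a * log (x / Λ₀)) ≠ 0) :
    HasDerivAt (fun y => tan (θ₀ + a * log (y / Λ₀)))
      (a / x * (1 + tan (θ₀ + a * log (x / Λ₀)) ^ 2)) x := by
  have hphase : HasDerivAt (fun y => θ₀ + a * log (y / Λ₀)) (a / x) x :=
    ((((hasDerivAt_id' x).div_const Λ₀).log (div_ne_zero hx hΛ₀)).const_mul a).const_add θ₀
      |>.congr_deriv (by field_simp)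
  have hsec : 1 / cos (θ₀ + a * log (x / Λ₀)) ^ 2 = 1 + tan (θ₀ + a * log (x / Λ₀)) ^ 2 := by
    rw [one_div, ← inv_one_add_tan_sq hcos, inv_inv]
  have h := (hasDerivAt_tan hcos).comp x hphase
  rwa [hsec, mul_comm] at h

lemma tan_add_mul_log_exp_pi_div_mul (θ a y : ℝ) :
    tan (θ + a * log (exp (π / a) * y)) = tan (θ + a * log y) := by
  rcases eq_or_ne a 0 with rfl | ha
  · simp
  rcases eq_or_ne y 0 with rfl | hy
  · simp
  rw [log_mul (exp_ne_zero _) hy, log_exp, mul_add, mul_div_cancel₀ _ ha, ← add_assoc,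
    add_right_comm, tan_add_pi]

theorem limit_cycle_flow_general (mI Λ₀ θ₀ : ℝ) (hΛ₀ : 0 < Λ₀) :
    let f : ℝ → ℝ := fun Λ => mI * Real.tan (θ₀ + mI * Real.log (Λ / Λ₀)) + mI^2 - 1/4
    (∀ Λ > (0:ℝ), (∀ k : ℤ, θ₀ + mI * Real.log (Λ / Λ₀) ≠ Real.pi/2 + Real.pi * k) →
        Λ * deriv f Λ = (f Λ + 1/4 - mI^2)^2 + mI^2) ∧
    (∀ Λ > (0:ℝ), (∀ k : ℤ, θ₀ + mI * Real.log (Λ / Λ₀) ≠ Real.pi/2 + Real.pi * k) →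
        f (Real.exp (Real.pi / mI) * Λ) = f Λ) := by
  intro f
  refine ⟨fun Λ hΛ hk => ?_, fun Λ _ _ => ?_⟩
  · have hf := (((hasDerivAt_tan_add_mul_log_div hΛ₀.ne' hΛ.ne'
      (cos_ne_zero_of_forall_ne_pi_div_two_add hk)).const_mul mI).add_const (mI ^ 2)).sub_const
      (1 / 4 : ℝ)
    rw [hf.deriv]
    simp only [f]
    field_simp
    ring
  · simp only [f, mul_div_assoc, tan_add_mul_log_exp_pi_div_mul]

/-- For negative coupling `α = -m_I² < 0` the running coupling
`f(Λ) = m_I tan(θ₀ + m_I log(Λ/Λ₀)) + m_I² - 1/4` satisfies the flow equation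
`Λ f'(Λ) = (f(Λ) + 1/4 - m_I²)² + m_I²` wherever it is defined, and exhibits the
discrete scaling symmetry `f(e^{π/m_I} Λ) = f(Λ)` (a limit cycle of log-period `π/m_I`). -/
theorem limit_cycle_flow (mI Λ₀ θ₀ : ℝ) (hmI : 0 < mI) (hΛ₀ : 0 < Λ₀) :
    let f : ℝ → ℝ := fun Λ => mI * Real.tan (θ₀ + mI * Real.log (Λ / Λ₀)) + mI^2 - 1/4
    (∀ Λ > (0:ℝ), (∀ k : ℤ, θ₀ + mI * Real.log (Λ / Λ₀) ≠ Real.pi/2 + Real.pi * k) →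
        Λ * deriv f Λ = (f Λ + 1/4 - mI^2)^2 + mI^2) ∧
    (∀ Λ > (0:ℝ), (∀ k : ℤ, θ₀ + mI * Real.log (Λ / Λ₀) ≠ Real.pi/2 + Real.pi * k) →
        f (Real.exp (Real.pi / mI) * Λ) = f Λ) :=
  limit_cycle_flow_general mI Λ₀ θ₀ hΛ₀
end

section
/- Let α ∈ ℝ and let ψ ∈ L^{2,∞}(ℝ₊) satisfy ∫₀^∞ ψ(p) dp = 0. Define (L̃_N ψ)(p) := p² ψ(p) − (α − 1/4) ∫₀^∞ max(p,q) ψ(q) dq (the inner integral converges absolutely). Then for every x > 0: −(𝓕_N ψ)''(x) + (α − 1/4) x⁻² (𝓕_N ψ)(x) = √(2/π) ∫₀^∞ cos(px) (L̃_N ψ)(p) dp, the last integral converging absolutely; i.e., the cosine transform intertwines the momentum-space Neumann Bessel operator with the Bessel differential expression L_α. -/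
/-!
Differentiating twice under the integral sign turns `-(𝓕_N ψ)''` into the cosine transform of
`p² ψ`. Since `∫ ψ = 0`, the kernel `max(p, q)` may be replaced by `(q - p)⁺`, which is
`O((q + q³) / (1 + p²))`; this makes the double integral absolutely convergent. Integrating
`cos(px) (q - p)⁺` over `p` gives `(1 - cos(qx)) / x²`, so by Fubini and `∫ ψ = 0` once more the
nonlocal term contributes `-x⁻² (𝓕_N ψ)(x)`.
-/

open MeasureTheory

/-- `ψ ∈ L^{2,∞}(ℝ₊)`: measurable with `∫₀^∞ pⁿ |ψ(p)|² dp < ∞` for all `n`. -/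
def MemL2Inf (ψ : ℝ → ℂ) : Prop :=
  AEStronglyMeasurable ψ (volume.restrict (Set.Ioi 0)) ∧
  ∀ n : ℕ, IntegrableOn (fun p : ℝ => p ^ n * ‖ψ p‖^2) (Set.Ioi 0)

/-- The cosine transform `(𝓕_N ψ)(x) = √(2/π) ∫₀^∞ cos(px) ψ(p) dp`. -/
noncomputable def cosineTransform (ψ : ℝ → ℂ) : ℝ → ℂ :=
  fun x => (Real.sqrt (2 / Real.pi) : ℂ) * ∫ p in Set.Ioi (0:ℝ), (Real.cos (p * x) : ℂ) * ψ p

/-- The momentum-space Neumann Bessel operator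
`(L̃_N ψ)(p) = p² ψ(p) - (α - 1/4) ∫₀^∞ max(p,q) ψ(q) dq`. -/
noncomputable def momentumBesselN (α : ℝ) (ψ : ℝ → ℂ) : ℝ → ℂ :=
  fun p => (p : ℂ)^2 * ψ p
    - ((α : ℂ) - 1/4) * ∫ q in Set.Ioi (0:ℝ), ((max p q : ℝ) : ℂ) * ψ q

open Set Real Function

theorem max_eq_add_max_sub_zero (p q : ℝ) : max p q = p + max (q - p) 0 := by
  rcases le_total p q with h | h <;> simp [h]

theorem max_sub_zero_mul_one_add_sq_le {p q : ℝ} (hp : 0 ≤ p) (hq : 0 ≤ q) :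
    max (q - p) 0 * (1 + p ^ 2) ≤ q + q ^ 3 := by
  rcases le_total q p with h | h
  · simp [max_eq_right (sub_nonpos.2 h)]
    positivity
  · rw [max_eq_left (sub_nonneg.2 h)]
    nlinarith [mul_le_mul h h hp hq, mul_nonneg hp hq, pow_nonneg hp 3]

theorem integral_cos_mul_sub {x : ℝ} (hx : x ≠ 0) (q : ℝ) :
    ∫ p in (0:ℝ)..q, cos (p * x) * (q - p) = (1 - cos (q * x)) / x ^ 2 := by
  have hderiv : ∀ p ∈ uIcc 0 q, HasDerivAt
      (fun p => (q - p) * sin (p * x) / x - cos (p * x) / x ^ 2) (cos (p * x) * (q - p)) p := by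
    intro p _
    have hpx : HasDerivAt (fun p => p * x) x p := hasDerivAt_mul_const x
    refine (((((hasDerivAt_id p).const_sub q).mul hpx.sin).div_const x).sub
      (hpx.cos.div_const (x ^ 2))).congr_deriv ?_
    simp only [id]
    field_simp
    ring
  rw [intervalIntegral.integral_eq_sub_of_hasDerivAt hderiv
    (Continuous.intervalIntegrable (by fun_prop) _ _)]
  simp only [sub_self, zero_mul, sin_zero, mul_zero, zero_div, cos_zero, sub_zero]
  ring

theorem integral_cos_mul_max_sub_zero {x q : ℝ} (hx : x ≠ 0) (hq : 0 ≤ q) :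
    ∫ p in Ioi 0, cos (p * x) * max (q - p) 0 = (1 - cos (q * x)) / x ^ 2 := by
  have hvanish : ∀ p ∈ Ioi 0 \ Ioc 0 q, cos (p * x) * max (q - p) 0 = 0 := fun p hp => by
    have hqp : q - p ≤ 0 := by
      simp only [mem_sdiff, mem_Ioi, mem_Ioc, not_and, not_le] at hp
      linarith [hp.2 hp.1]
    simp [max_eq_right hqp]
  rw [setIntegral_eq_of_subset_of_forall_sdiff_eq_zero measurableSet_Ioi Ioc_subset_Ioi_self
    hvanish, ← intervalIntegral.integral_of_le hq, ← integral_cos_mul_sub hx q]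
  refine intervalIntegral.integral_congr fun p hp => ?_
  rw [uIcc_of_le hq] at hp
  simp only [max_eq_left (sub_nonneg.2 hp.2)]

namespace MemL2Inf

variable {ψ : ℝ → ℂ}

theorem integrableOn_pow_mul_norm (hψ : MemL2Inf ψ) (n : ℕ) :
    IntegrableOn (fun p : ℝ => p ^ n * ‖ψ p‖) (Ioi 0) := by
  have hdom : IntegrableOn (fun p : ℝ =>
      (p ^ (2 * n) * ‖ψ p‖ ^ 2 + p ^ (2 * n + 2) * ‖ψ p‖ ^ 2 + (1 + p ^ 2)⁻¹) / 2) (Ioi 0) :=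
    (((hψ.2 _).add (hψ.2 _)).add integrable_inv_one_add_sq.integrableOn).div_const 2
  refine hdom.mono' ((continuous_pow n).aestronglyMeasurable.mul hψ.1.norm) ?_
  filter_upwards [ae_restrict_mem measurableSet_Ioi] with p hp
  have hp : 0 < p := hp
  set t := p ^ n * ‖ψ p‖
  have hamgm : t ≤ ((1 + p ^ 2) * t ^ 2 + (1 + p ^ 2)⁻¹) / 2 := by
    field_simp
    nlinarith [sq_nonneg ((1 + p ^ 2) * t - 1)]
  rw [Real.norm_of_nonneg (by positivity)]
  convert hamgm using 2
  ring

theorem integrableOn_mul_of_norm_le_pow (hψ : MemL2Inf ψ) {g : ℝ → ℂ} (n : ℕ)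
    (hg : AEStronglyMeasurable g (volume.restrict (Ioi 0))) (hle : ∀ p > 0, ‖g p‖ ≤ p ^ n) :
    IntegrableOn (fun p => g p * ψ p) (Ioi 0) := by
  refine (hψ.integrableOn_pow_mul_norm n).mono' (hg.mul hψ.1) ?_
  filter_upwards [ae_restrict_mem measurableSet_Ioi] with p hp
  rw [norm_mul]
  exact mul_le_mul_of_nonneg_right (hle p hp) (norm_nonneg _)

theorem integrableOn (hψ : MemL2Inf ψ) : IntegrableOn ψ (Ioi 0) := by
  simpa using hψ.integrableOn_mul_of_norm_le_pow (g := 1) 0 aestronglyMeasurable_const (by simp)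

theorem hasDerivAt_integral_kernel_mul (hψ : MemL2Inf ψ) {k k' : ℝ → ℝ → ℝ} (n : ℕ)
    (hk : Continuous (uncurry k)) (hk' : Continuous (uncurry k'))
    (hk_le : ∀ p > 0, ∀ y, |k p y| ≤ p ^ n) (hk'_le : ∀ p > 0, ∀ y, |k' p y| ≤ p ^ (n + 1))
    (hderiv : ∀ p y, HasDerivAt (k p) (k' p y) y) (x : ℝ) :
    HasDerivAt (fun y => ∫ p in Ioi 0, (k p y : ℂ) * ψ p)
      (∫ p in Ioi 0, (k' p x : ℂ) * ψ p) x := by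
  have hmeas : ∀ {κ : ℝ → ℝ → ℝ}, Continuous (uncurry κ) → ∀ y,
      AEStronglyMeasurable (fun p => (κ p y : ℂ)) (volume.restrict (Ioi 0)) := fun hκ y =>
    (Complex.continuous_ofReal.comp
      (hκ.comp (continuous_id.prodMk continuous_const))).aestronglyMeasurable
  refine (hasDerivAt_integral_of_dominated_loc_of_deriv_le (bound := fun p => p ^ (n + 1) * ‖ψ p‖)
    Filter.univ_mem (Filter.Eventually.of_forall fun y => (hmeas hk y).mul hψ.1)
    (hψ.integrableOn_mul_of_norm_le_pow n (hmeas hk x) fun p hp => ?_) ((hmeas hk' x).mul hψ.1)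
    ?_ (hψ.integrableOn_pow_mul_norm (n + 1))
    (Filter.Eventually.of_forall fun p y _ => (hderiv p y).ofReal_comp.mul_const (ψ p))).2
  · rw [Complex.norm_real]
    exact hk_le p hp x
  · filter_upwards [ae_restrict_mem measurableSet_Ioi] with p hp y _
    rw [norm_mul, Complex.norm_real]
    exact mul_le_mul_of_nonneg_right (hk'_le p hp y) (norm_nonneg _)

theorem deriv_deriv_cosineTransform (hψ : MemL2Inf ψ) :
    deriv (deriv (cosineTransform ψ)) = -cosineTransform (fun p => (p : ℂ) ^ 2 * ψ p) := by
  have hpy (p y : ℝ) : HasDerivAt (fun y => p * y) p y := by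
    simpa using (hasDerivAt_id y).const_mul p
  have hcos (p y : ℝ) : HasDerivAt (fun y => cos (p * y)) (-(p * sin (p * y))) y :=
    (hpy p y).cos.congr_deriv (by ring)
  have hsin (p y : ℝ) : HasDerivAt (fun y => -(p * sin (p * y))) (-(p ^ 2 * cos (p * y))) y :=
    ((hpy p y).sin.const_mul p).neg.congr_deriv (by ring)
  have hfirst := hψ.hasDerivAt_integral_kernel_mul 0 (by fun_prop) (by fun_prop)
    (fun p _ y => by simpa using abs_cos_le_one (p * y))
    (fun p hp y => by
      rw [abs_neg, abs_mul, abs_of_pos hp, zero_add, pow_one]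
      exact mul_le_of_le_one_right hp.le (abs_sin_le_one _))
    hcos
  have hsecond := hψ.hasDerivAt_integral_kernel_mul 1 (by fun_prop) (by fun_prop)
    (fun p hp y => by
      rw [abs_neg, abs_mul, abs_of_pos hp, pow_one]
      exact mul_le_of_le_one_right hp.le (abs_sin_le_one _))
    (fun p hp y => by
      rw [abs_neg, abs_mul, abs_of_pos (pow_pos hp 2)]
      exact mul_le_of_le_one_right (by positivity) (abs_cos_le_one _))
    hsin
  have hderiv : deriv (cosineTransform ψ) = fun y => (√(2 / π) : ℂ) *
      ∫ p in Ioi 0, ((-(p * sin (p * y)) : ℝ) : ℂ) * ψ p :=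
    funext fun y => ((hfirst y).const_mul _).deriv
  funext x
  rw [hderiv, ((hsecond x).const_mul _).deriv, Pi.neg_apply, cosineTransform, ← mul_neg,
    ← integral_neg]
  congr 2 with p
  push_cast
  ring

theorem integrableOn_max_sub_zero_mul (hψ : MemL2Inf ψ) {p : ℝ} (hp : 0 ≤ p) :
    IntegrableOn (fun q => ((max (q - p) 0 : ℝ) : ℂ) * ψ q) (Ioi 0) :=
  hψ.integrableOn_mul_of_norm_le_pow 1 (Continuous.aestronglyMeasurable (by fun_prop))
    fun q hq => by
      rw [Complex.norm_real, Real.norm_of_nonneg (le_max_right _ _), pow_one]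
      exact max_le (by linarith) hq.le

theorem integrableOn_max_mul (hψ : MemL2Inf ψ) {p : ℝ} (hp : 0 ≤ p) :
    IntegrableOn (fun q => ((max p q : ℝ) : ℂ) * ψ q) (Ioi 0) := by
  simp_rw [max_eq_add_max_sub_zero p, Complex.ofReal_add, add_mul]
  exact (hψ.integrableOn.const_mul _).add (hψ.integrableOn_max_sub_zero_mul hp)

theorem integral_max_mul (hψ : MemL2Inf ψ) (hmom : ∫ p in Ioi (0:ℝ), ψ p = 0) {p : ℝ}
    (hp : 0 ≤ p) :
    ∫ q in Ioi 0, ((max p q : ℝ) : ℂ) * ψ q = ∫ q in Ioi 0, ((max (q - p) 0 : ℝ) : ℂ) * ψ q := by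
  simp_rw [max_eq_add_max_sub_zero p, Complex.ofReal_add, add_mul]
  rw [integral_add (hψ.integrableOn.const_mul _) (hψ.integrableOn_max_sub_zero_mul hp),
    integral_const_mul, hmom, mul_zero, zero_add]

theorem integrable_cos_mul_max_sub_zero_mul (hψ : MemL2Inf ψ) (x : ℝ) :
    Integrable (fun z : ℝ × ℝ => (cos (z.1 * x) : ℂ) * (((max (z.2 - z.1) 0 : ℝ) : ℂ) * ψ z.2))
      ((volume.restrict (Ioi 0)).prod (volume.restrict (Ioi 0))) := by
  have hdom := (integrable_inv_one_add_sq.integrableOn (s := Ioi 0)).mul_prod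
    ((hψ.integrableOn_pow_mul_norm 1).add (hψ.integrableOn_pow_mul_norm 3))
  refine hdom.mono' ((Continuous.aestronglyMeasurable (by fun_prop)).mul
    ((Continuous.aestronglyMeasurable (by fun_prop)).mul hψ.1.comp_snd)) ?_
  rw [Measure.prod_restrict]
  filter_upwards [ae_restrict_mem (measurableSet_Ioi.prod measurableSet_Ioi)] with z hz
  obtain ⟨hp, hq⟩ : 0 < z.1 ∧ 0 < z.2 := hz
  have hs : 0 < 1 + z.1 ^ 2 := by positivity
  simp only [Pi.add_apply]
  rw [norm_mul, norm_mul, Complex.norm_real, Complex.norm_real, Real.norm_of_nonneg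
    (le_max_right _ _), ← mul_assoc, pow_one, ← add_mul, ← mul_assoc]
  refine mul_le_mul_of_nonneg_right ?_ (norm_nonneg _)
  calc ‖cos (z.1 * x)‖ * max (z.2 - z.1) 0 ≤ max (z.2 - z.1) 0 :=
        mul_le_of_le_one_left (le_max_right _ _) (by simpa using abs_cos_le_one _)
    _ ≤ (1 + z.1 ^ 2)⁻¹ * (z.2 + z.2 ^ 3) := by
        rw [le_inv_mul_iff₀ hs, mul_comm]
        exact max_sub_zero_mul_one_add_sq_le hp.le hq.le

theorem integrableOn_cos_mul_integral_max_sub_zero_mul (hψ : MemL2Inf ψ) (x : ℝ) :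
    IntegrableOn (fun p => (cos (p * x) : ℂ) * ∫ q in Ioi 0, ((max (q - p) 0 : ℝ) : ℂ) * ψ q)
      (Ioi 0) := by
  simpa only [integral_const_mul, IntegrableOn] using
    (hψ.integrable_cos_mul_max_sub_zero_mul x).integral_prod_left

theorem integral_cos_mul_integral_max_sub_zero_mul (hψ : MemL2Inf ψ)
    (hmom : ∫ p in Ioi (0:ℝ), ψ p = 0) {x : ℝ} (hx : x ≠ 0) :
    ∫ p in Ioi 0, (cos (p * x) : ℂ) * ∫ q in Ioi 0, ((max (q - p) 0 : ℝ) : ℂ) * ψ q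
      = -((x : ℂ) ^ 2)⁻¹ * ∫ p in Ioi 0, (cos (p * x) : ℂ) * ψ p := by
  have hcos : IntegrableOn (fun p => (cos (p * x) : ℂ) * ψ p) (Ioi 0) :=
    hψ.integrableOn_mul_of_norm_le_pow 0 (Continuous.aestronglyMeasurable (by fun_prop))
      fun p _ => by rw [Complex.norm_real, pow_zero]; exact abs_cos_le_one _
  calc ∫ p in Ioi 0, (cos (p * x) : ℂ) * ∫ q in Ioi 0, ((max (q - p) 0 : ℝ) : ℂ) * ψ q
      = ∫ p in Ioi 0, ∫ q in Ioi 0, (cos (p * x) : ℂ) * (((max (q - p) 0 : ℝ) : ℂ) * ψ q) := by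
        simp_rw [integral_const_mul]
    _ = ∫ q in Ioi 0, ∫ p in Ioi 0, (cos (p * x) : ℂ) * (((max (q - p) 0 : ℝ) : ℂ) * ψ q) :=
        integral_integral_swap (hψ.integrable_cos_mul_max_sub_zero_mul x)
    _ = ∫ q in Ioi 0, (((x : ℂ) ^ 2)⁻¹ * ψ q - ((x : ℂ) ^ 2)⁻¹ * ((cos (q * x) : ℂ) * ψ q)) := by
        refine setIntegral_congr_fun measurableSet_Ioi fun q hq => ?_
        simp_rw [← mul_assoc, ← Complex.ofReal_mul]
        rw [integral_mul_const, integral_complex_ofReal,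
          integral_cos_mul_max_sub_zero hx (le_of_lt hq)]
        push_cast
        ring
    _ = _ := by
        rw [integral_sub (hψ.integrableOn.const_mul _) (hcos.const_mul _), integral_const_mul,
          integral_const_mul, hmom]
        ring

end MemL2Inf

/-- The cosine transform intertwines the momentum-space Neumann Bessel operator with the
Bessel differential expression `L_α`, on minimal-domain vectors. -/
theorem cosineTransform_intertwines_besselN (α : ℝ) (ψ : ℝ → ℂ) (hψ : MemL2Inf ψ)
    (hmom : ∫ p in Set.Ioi (0:ℝ), ψ p = 0) :
    (∀ p > (0:ℝ), IntegrableOn (fun q : ℝ => ((max p q : ℝ) : ℂ) * ψ q) (Set.Ioi 0)) ∧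
    ∀ x > (0:ℝ),
      IntegrableOn (fun p : ℝ => (Real.cos (p * x) : ℂ) * momentumBesselN α ψ p)
        (Set.Ioi 0) ∧
      -(deriv (deriv (cosineTransform ψ)) x)
          + ((α : ℂ) - 1/4) * ((x : ℂ)^2)⁻¹ * cosineTransform ψ x
        = (Real.sqrt (2 / Real.pi) : ℂ) *
            ∫ p in Set.Ioi (0:ℝ), (Real.cos (p * x) : ℂ) * momentumBesselN α ψ p := by
  refine ⟨fun p hp => hψ.integrableOn_max_mul hp.le, fun x hx => ?_⟩
  have hsplit : EqOn (fun p => (cos (p * x) : ℂ) * momentumBesselN α ψ p)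
      (fun p => (cos (p * x) : ℂ) * ((p : ℂ) ^ 2 * ψ p) - ((α : ℂ) - 1 / 4) *
        ((cos (p * x) : ℂ) * ∫ q in Ioi 0, ((max (q - p) 0 : ℝ) : ℂ) * ψ q)) (Ioi 0) :=
    fun p hp => by
      simp only [momentumBesselN, hψ.integral_max_mul hmom (le_of_lt hp)]
      ring
  have hlocal : IntegrableOn (fun p => (cos (p * x) : ℂ) * ((p : ℂ) ^ 2 * ψ p)) (Ioi 0) := by
    simp_rw [← mul_assoc]
    refine hψ.integrableOn_mul_of_norm_le_pow 2 (Continuous.aestronglyMeasurable (by fun_prop))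
      fun p _ => ?_
    rw [norm_mul, norm_pow, Complex.norm_real, Complex.norm_real, Real.norm_eq_abs,
      Real.norm_eq_abs, sq_abs]
    exact mul_le_of_le_one_left (sq_nonneg _) (abs_cos_le_one _)
  have hnonlocal :=
    (hψ.integrableOn_cos_mul_integral_max_sub_zero_mul x).const_mul ((α : ℂ) - 1 / 4)
  refine ⟨(hlocal.sub hnonlocal).congr_fun hsplit.symm measurableSet_Ioi, ?_⟩
  rw [setIntegral_congr_fun measurableSet_Ioi hsplit, integral_sub hlocal hnonlocal,
    integral_const_mul, hψ.integral_cos_mul_integral_max_sub_zero_mul hmom hx.ne',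
    hψ.deriv_deriv_cosineTransform]
  simp only [cosineTransform, Pi.neg_apply]
  ring
end
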